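/- For β > 0, q ≥ 2, and odd n ≥ 3, U_{C_n}^q(β) > e^{−β}/(e^{−β}+q−1), and for even n ≥ 4, U_{C_n}^q(β) < e^{−β}/(e^{−β}+q−1). Moreover lim_{n→∞} U_{C_n}^q(β) = e^{−β}/(e^{−β}+q−1). -/

import Mathlib

open scoped Classical
open Finset

/-- Number of monochromatic edges of `G` under the coloring `σ`. -/
noncomputable def monoEdges {V : Type} [Fintype V] (G : SimpleGraph V) {q : ℕ}
    (σ : V → Fin q) : ℕ :=
  (G.edgeFinset.filter fun e =>
    Sym2.lift ⟨fun u v => σ u = σ v, fun _ _ => propext eq_comm⟩ e).card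

/-- The `q`-color Potts partition function of `G` at inverse temperature `β`. -/
noncomputable def pottsZ {V : Type} [Fintype V] (G : SimpleGraph V) (q : ℕ) (β : ℝ) : ℝ :=
  ∑ σ : V → Fin q, Real.exp (-β * monoEdges G σ)

/-- The internal energy per particle: expected number of monochromatic
edges per vertex in the Potts model. -/
noncomputable def pottsU {V : Type} [Fintype V] (G : SimpleGraph V) (q : ℕ) (β : ℝ) : ℝ :=
  (Fintype.card V : ℝ)⁻¹ *
    (∑ σ : V → Fin q, (monoEdges G σ : ℝ) * Real.exp (-β * monoEdges G σ)) / pottsZ G q β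

/-- The number of proper `q`-colorings of `G`. -/
noncomputable def properCount {V : Type} [Fintype V] (G : SimpleGraph V) (q : ℕ) : ℕ :=
  (Finset.univ.filter fun σ : V → Fin q => monoEdges G σ = 0).card

/-!
Transfer matrix argument. With `w = exp (-β)`, the Boltzmann weight of a colouring of `C_n`
factorises over the edges, so `Z = tr Tⁿ` for `T = (w - 1) • 1 + J` (`J` the all-ones matrix).
Since `J² = q J`, `T` has eigenvalues `w + q - 1` (once) and `w - 1` (`q - 1` times), whence
`Z = (w + q - 1)ⁿ + (q - 1) (w - 1)ⁿ`. The total energy is `-∂Z/∂β`, which gives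
`U = w Z_{n-1} / Z_n` and
`U - w / (w + q - 1) = w q (q - 1) (w - 1)ⁿ⁻¹ / ((w + q - 1) Z_n)`.
For `β > 0` we have `-1 < w - 1 < 0`, so the sign is that of `(-1)ⁿ⁻¹`, and the difference
vanishes in the limit because `|w - 1| < w + q - 1`.
-/

open Filter SimpleGraph Topology

theorem Fin.cons_add_one_eq_snoc {α : Type*} {n : ℕ} (a : α) (τ : Fin n → α)
    (i : Fin (n + 1)) :
    (Fin.cons a τ : Fin (n + 1) → α) (i + 1) = (Fin.snoc τ a : Fin (n + 1) → α) i := by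
  induction i using Fin.lastCases with
  | last => simp
  | cast j => simp [Fin.coeSucc_eq_succ]

/-- `Fin.cons a τ` and `Fin.snoc τ b` list the walk `a, τ 0, …, τ (n - 1), b` without its last,
resp. first, vertex, so the `i`-th factor is the weight of its `i`-th step. -/
theorem Matrix.pow_succ_apply_eq_sum_prod {α R : Type*} [Fintype α] [DecidableEq α]
    [CommSemiring R] (M : Matrix α α R) (n : ℕ) (a b : α) :
    (M ^ (n + 1)) a b = ∑ τ : Fin n → α, ∏ i : Fin (n + 1),
      M ((Fin.cons a τ : Fin (n + 1) → α) i) ((Fin.snoc τ b : Fin (n + 1) → α) i) := by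
  induction n generalizing a with
  | zero => simp [Fin.snoc]
  | succ n ih =>
    rw [pow_succ', Matrix.mul_apply, ← (Fin.consEquiv fun _ => α).sum_comp,
      Fintype.sum_prod_type]
    refine Finset.sum_congr rfl fun c _ => ?_
    rw [ih, Finset.mul_sum]
    refine Finset.sum_congr rfl fun τ _ => ?_
    rw [Fin.prod_univ_succ (n := n + 1)]
    simp [Fin.consEquiv, ← Fin.cons_snoc_eq_snoc_cons]

theorem Matrix.trace_pow_succ_eq_sum_prod {α R : Type*} [Fintype α] [DecidableEq α]
    [CommSemiring R] (M : Matrix α α R) (n : ℕ) :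
    (M ^ (n + 1)).trace = ∑ σ : Fin (n + 1) → α, ∏ i, M (σ i) (σ (i + 1)) := by
  rw [← (Fin.consEquiv fun _ => α).sum_comp, Fintype.sum_prod_type, Matrix.trace]
  refine Finset.sum_congr rfl fun a _ => ?_
  rw [Matrix.diag_apply, Matrix.pow_succ_apply_eq_sum_prod]
  simp [Fin.consEquiv, Fin.cons_add_one_eq_snoc]

theorem add_pow_of_mul_self_eq_smul {R A : Type*} [Field R] [Ring A] [Algebra R A] {J : A}
    {q : R} (hq : q ≠ 0) (hJ : J * J = q • J) (c : R) (n : ℕ) :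
    (algebraMap R A c + J) ^ n = algebraMap R A (c ^ n) + (((c + q) ^ n - c ^ n) / q) • J := by
  induction n with
  | zero => simp
  | succ n ih =>
    have hcoef : ((c + q) ^ (n + 1) - c ^ (n + 1)) / q
        = c ^ n + ((c + q) ^ n - c ^ n) / q * (c + q) := by
      field_simp
      ring
    rw [pow_succ, ih, hcoef]
    simp only [Algebra.algebraMap_eq_smul_one, add_mul, mul_add, smul_mul_assoc, mul_smul_comm,
      one_mul, mul_one, hJ, smul_smul]
    module

def pottsTransfer (α : Type*) [DecidableEq α] {R : Type*} [One R] (w : R) : Matrix α α R :=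
  Matrix.of fun a b => if a = b then w else 1

theorem trace_pottsTransfer_pow {α R : Type*} [Fintype α] [DecidableEq α] [Nonempty α]
    [Field R] [CharZero R] (w : R) (n : ℕ) :
    (pottsTransfer α w ^ n).trace
      = (w + Fintype.card α - 1) ^ n + (Fintype.card α - 1) * (w - 1) ^ n := by
  set J : Matrix α α R := Matrix.of fun _ _ => 1
  have hT : pottsTransfer α w = algebraMap R _ (w - 1) + J := by
    ext a b
    by_cases h : a = b <;> simp [pottsTransfer, J, h, Matrix.algebraMap_matrix_apply]
  have hJ : J * J = (Fintype.card α : R) • J := by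
    ext a b
    simp [J, Matrix.mul_apply]
  have hJtrace : J.trace = Fintype.card α := by simp [J, Matrix.trace]
  have hq : (Fintype.card α : R) ≠ 0 := by simp
  rw [hT, add_pow_of_mul_self_eq_smul hq hJ, Matrix.trace_add, Matrix.trace_smul, hJtrace,
    smul_eq_mul, div_mul_cancel₀ _ hq, Algebra.algebraMap_eq_smul_one, Matrix.trace_smul,
    Matrix.trace_one, smul_eq_mul]
  ring

theorem SimpleGraph.cycleGraph_edgeFinset (n : ℕ) [Fintype (cycleGraph (n + 3)).edgeSet] :
    (cycleGraph (n + 3)).edgeFinset = univ.image fun i : Fin (n + 3) => s(i, i + 1) := by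
  ext e
  induction e using Sym2.ind with
  | h u v =>
    simp only [mem_edgeFinset, mem_edgeSet, cycleGraph_adj, mem_image, mem_univ, true_and,
      Sym2.eq_iff, sub_eq_iff_eq_add]
    grind

theorem SimpleGraph.cycleGraph_edge_injective (n : ℕ) :
    Function.Injective fun i : Fin (n + 3) => s(i, i + 1) := by
  intro i j h
  simp only [Sym2.eq_iff] at h
  rcases h with ⟨h, _⟩ | ⟨rfl, h⟩
  · exact h
  · have h2 : (1 + 1 : Fin (n + 3)) = 0 := by simpa [add_assoc] using h
    rw [Fin.ext_iff, Fin.val_add, Fin.val_one, Nat.mod_eq_of_lt (by omega)] at h2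
    simp at h2

theorem monoEdges_cycleGraph {q : ℕ} (n : ℕ) (σ : Fin (n + 3) → Fin q) :
    monoEdges (cycleGraph (n + 3)) σ = #{i | σ i = σ (i + 1)} := by
  rw [monoEdges, cycleGraph_edgeFinset, filter_image,
    card_image_of_injective _ (cycleGraph_edge_injective n)]
  simp only [Sym2.lift_mk]
  -- `monoEdges` decides `σ u = σ v` classically
  congr 1
  exact filter_congr_decidable _ _ _

theorem exp_neg_mul_monoEdges_cycleGraph {q : ℕ} (n : ℕ) (β : ℝ) (σ : Fin (n + 3) → Fin q) :
    Real.exp (-β * monoEdges (cycleGraph (n + 3)) σ)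
      = ∏ i, pottsTransfer (Fin q) (Real.exp (-β)) (σ i) (σ (i + 1)) := by
  rw [monoEdges_cycleGraph, mul_comm, Real.exp_nat_mul]
  simp [pottsTransfer, prod_ite]

def cyclePartition (q n : ℕ) (w : ℝ) : ℝ :=
  (w + q - 1) ^ n + (q - 1) * (w - 1) ^ n

theorem pottsZ_cycleGraph {q : ℕ} (hq : 0 < q) (n : ℕ) (β : ℝ) :
    pottsZ (cycleGraph (n + 3)) q β = cyclePartition q (n + 3) (Real.exp (-β)) := by
  have : Nonempty (Fin q) := ⟨⟨0, hq⟩⟩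
  have htrace := trace_pottsTransfer_pow (α := Fin q) (Real.exp (-β)) (n + 3)
  rw [Fintype.card_fin, Matrix.trace_pow_succ_eq_sum_prod] at htrace
  rw [cyclePartition, ← htrace, pottsZ]
  convert sum_congr rfl fun σ _ => exp_neg_mul_monoEdges_cycleGraph n β σ

theorem pottsZ_pos {V : Type} [Fintype V] (G : SimpleGraph V) {q : ℕ} (hq : 0 < q) (β : ℝ) :
    0 < pottsZ G q β :=
  have : Nonempty (V → Fin q) := ⟨fun _ => ⟨0, hq⟩⟩
  sum_pos (fun _ _ => Real.exp_pos _) univ_nonempty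

theorem hasDerivAt_cyclePartition (q n : ℕ) (w : ℝ) :
    HasDerivAt (cyclePartition q (n + 1)) ((n + 1) * cyclePartition q n w) w := by
  have hA : HasDerivAt (fun x : ℝ => x + q - 1) 1 w :=
    ((hasDerivAt_id' w).add_const _).sub_const 1
  have hB : HasDerivAt (fun x : ℝ => x - 1) 1 w := (hasDerivAt_id' w).sub_const 1
  refine ((hA.fun_pow (n + 1)).add ((hB.fun_pow (n + 1)).const_mul ((q : ℝ) - 1))).congr_deriv ?_
  simp only [cyclePartition, Nat.cast_add, Nat.cast_one, add_tsub_cancel_right, mul_one]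
  ring

theorem sum_mul_exp_neg_mul_eq_neg_deriv {ι : Type*} (s : Finset ι) (E : ι → ℝ) {F : ℝ → ℝ}
    (hF : ∀ β, ∑ i ∈ s, Real.exp (-β * E i) = F β) {F' β : ℝ} (h : HasDerivAt F F' β) :
    ∑ i ∈ s, E i * Real.exp (-β * E i) = -F' := by
  have hsum : HasDerivAt F (∑ i ∈ s, Real.exp (-β * E i) * -E i) β := by
    rw [← funext hF]
    exact HasDerivAt.fun_sum fun i _ => by
      simpa using ((hasDerivAt_neg β).mul_const (E i)).exp
  rw [h.unique hsum, ← sum_neg_distrib]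
  exact sum_congr rfl fun i _ => by ring

theorem pottsU_cycleGraph {q : ℕ} (hq : 0 < q) (n : ℕ) (β : ℝ) :
    pottsU (cycleGraph (n + 3)) q β
      = Real.exp (-β) * cyclePartition q (n + 2) (Real.exp (-β))
        / cyclePartition q (n + 3) (Real.exp (-β)) := by
  have hderiv := (hasDerivAt_cyclePartition q (n + 2) (Real.exp (-β))).comp β
    (hasDerivAt_neg β).exp
  rw [pottsU, sum_mul_exp_neg_mul_eq_neg_deriv _ _ (pottsZ_cycleGraph hq n) hderiv,
    pottsZ_cycleGraph hq, Fintype.card_fin]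
  field_simp
  push_cast
  ring

theorem pottsU_cycleGraph_sub {q : ℕ} (hq : 0 < q) (n : ℕ) (β : ℝ) :
    pottsU (cycleGraph (n + 3)) q β - Real.exp (-β) / (Real.exp (-β) + q - 1)
      = Real.exp (-β) * q * (q - 1) * (Real.exp (-β) - 1) ^ (n + 2)
        / ((Real.exp (-β) + q - 1) * pottsZ (cycleGraph (n + 3)) q β) := by
  have hA : 0 < Real.exp (-β) + q - 1 := by
    have : (1 : ℝ) ≤ q := by exact_mod_cast hq
    linarith [Real.exp_pos (-β)]
  have hZ := pottsZ_pos (cycleGraph (n + 3)) hq β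
  rw [pottsZ_cycleGraph hq] at hZ ⊢
  rw [pottsU_cycleGraph hq, div_sub_div _ _ hZ.ne' hA.ne',
    div_eq_div_iff (mul_ne_zero hZ.ne' hA.ne') (mul_ne_zero hA.ne' hZ.ne')]
  simp only [cyclePartition]
  ring

theorem lt_pottsU_cycleGraph_of_odd {q : ℕ} (hq : 2 ≤ q) {β : ℝ} (hβ : β ≠ 0) {n : ℕ}
    (hn : 3 ≤ n) (hodd : Odd n) :
    Real.exp (-β) / (Real.exp (-β) + q - 1) < pottsU (cycleGraph n) q β := by
  obtain ⟨m, rfl⟩ : ∃ m, n = m + 3 := ⟨n - 3, by omega⟩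
  have hq1 : (1 : ℝ) < q := by exact_mod_cast hq
  have hB : 0 < (Real.exp (-β) - 1) ^ (m + 2) := by
    refine Even.pow_pos ?_ (sub_ne_zero.mpr (by simpa using hβ))
    simpa [Nat.odd_add, parity_simps] using hodd
  rw [← sub_pos, pottsU_cycleGraph_sub (by omega)]
  have hZ := pottsZ_pos (cycleGraph (m + 3)) (by omega : 0 < q) β
  have hw := Real.exp_pos (-β)
  exact div_pos (by positivity) (mul_pos (by linarith) hZ)

theorem pottsU_cycleGraph_lt_of_even {q : ℕ} (hq : 2 ≤ q) {β : ℝ} (hβ : 0 < β) {n : ℕ}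
    (hn : 4 ≤ n) (heven : Even n) :
    pottsU (cycleGraph n) q β < Real.exp (-β) / (Real.exp (-β) + q - 1) := by
  obtain ⟨m, rfl⟩ : ∃ m, n = m + 3 := ⟨n - 3, by omega⟩
  have hq1 : (1 : ℝ) < q := by exact_mod_cast hq
  have hw := Real.exp_pos (-β)
  have hB : (Real.exp (-β) - 1) ^ (m + 2) < 0 := by
    refine Odd.pow_neg ?_ (sub_neg.mpr (Real.exp_lt_one_iff.mpr (neg_lt_zero.mpr hβ)))
    simpa [Nat.even_add, parity_simps] using heven
  rw [← sub_neg, pottsU_cycleGraph_sub (by omega)]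
  have hZ := pottsZ_pos (cycleGraph (m + 3)) (by omega : 0 < q) β
  exact div_neg_of_neg_of_pos (mul_neg_of_pos_of_neg (by positivity) hB)
    (mul_pos (by linarith) hZ)

theorem tendsto_cyclePartition_div_pow {q : ℕ} {w : ℝ} (hw : |w - 1| < w + q - 1) :
    Tendsto (fun n => cyclePartition q n w / (w + q - 1) ^ n) atTop (𝓝 1) := by
  have hA : 0 < w + q - 1 := (abs_nonneg _).trans_lt hw
  have hr : |(w - 1) / (w + q - 1)| < 1 := by
    rwa [abs_div, abs_of_pos hA, div_lt_one hA]
  have hlim :=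
    ((tendsto_pow_atTop_nhds_zero_of_abs_lt_one hr).const_mul ((q : ℝ) - 1)).const_add 1
  rw [mul_zero, add_zero] at hlim
  refine hlim.congr fun n => ?_
  rw [cyclePartition, div_pow]
  field_simp

theorem tendsto_pottsU_cycleGraph {q : ℕ} (hq : 2 ≤ q) (β : ℝ) :
    Tendsto (fun n => pottsU (cycleGraph n) q β) atTop
      (𝓝 (Real.exp (-β) / (Real.exp (-β) + q - 1))) := by
  have hq2 : (2 : ℝ) ≤ q := by exact_mod_cast hq
  have hw := Real.exp_pos (-β)
  have hA : 0 < Real.exp (-β) + q - 1 := by linarith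
  have hlim := tendsto_cyclePartition_div_pow (q := q) (w := Real.exp (-β))
    (abs_lt.mpr ⟨by linarith, by linarith⟩)
  have hratio := ((hlim.comp (tendsto_sub_atTop_nat 1)).div hlim one_ne_zero).const_mul
    (Real.exp (-β) / (Real.exp (-β) + q - 1))
  rw [div_one, mul_one] at hratio
  refine hratio.congr' ?_
  filter_upwards [eventually_ge_atTop 3] with n hn
  obtain ⟨m, rfl⟩ : ∃ m, n = m + 3 := ⟨n - 3, by omega⟩
  have hZ := pottsZ_pos (cycleGraph (m + 3)) (by omega : 0 < q) β
  rw [pottsZ_cycleGraph (by omega)] at hZ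
  simp only [Pi.div_apply, Function.comp_apply, pottsU_cycleGraph (by omega : 0 < q)]
  rw [show m + 3 - 1 = m + 2 from rfl]
  field_simp
  ring

theorem potts_energy_cycle_vs_line (q : ℕ) (hq : 2 ≤ q) (β : ℝ) (hβ : 0 < β) :
    (∀ n : ℕ, 3 ≤ n → Odd n →
      Real.exp (-β) / (Real.exp (-β) + (q : ℝ) - 1) < pottsU (SimpleGraph.cycleGraph n) q β) ∧
    (∀ n : ℕ, 4 ≤ n → Even n →
      pottsU (SimpleGraph.cycleGraph n) q β < Real.exp (-β) / (Real.exp (-β) + (q : ℝ) - 1)) ∧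
    Filter.Tendsto (fun n : ℕ => pottsU (SimpleGraph.cycleGraph n) q β) Filter.atTop
      (nhds (Real.exp (-β) / (Real.exp (-β) + (q : ℝ) - 1))) :=
  ⟨fun _ hn hodd => lt_pottsU_cycleGraph_of_odd hq hβ.ne' hn hodd,
    fun _ hn heven => pottsU_cycleGraph_lt_of_even hq hβ hn heven,
    tendsto_pottsU_cycleGraph hq β⟩
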